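/- arXiv:1105.0621 — 7 statements merged into one kernel-verified Lean document; each statement's English description precedes it below -/
import Mathlib

section
/- Let a and b be distinct positive real numbers. Then the function f₁(k) = ((a^k + b^k)/2)^(1/k) (the power mean of order k of a and b) is strictly increasing on the set of nonzero real numbers k; that is, for all nonzero real numbers k₁ < k₂, one has ((a^{k₁} + b^{k₁})/2)^(1/k₁) < ((a^{k₂} + b^{k₂})/2)^(1/k₂). -/
/-!
For exponents `0 < p < q`, strict convexity of `t ↦ t ^ (q / p)` at the midpoint of
`a ^ p` and `b ^ p` gives `A_p < A_q`; strict AM-GM applied to `a ^ k` and `b ^ k` places the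
geometric mean `√(a * b)` strictly below every `A_k` with `k > 0`. The identity
`A_{-k}(a, b) = A_k(a⁻¹, b⁻¹)⁻¹` transfers both facts to negative exponents, and the geometric
mean separates the two signs.
-/

open Real

noncomputable def powerMean (k a b : ℝ) : ℝ := ((a ^ k + b ^ k) / 2) ^ (1 / k)

lemma powerMean_pos {a b : ℝ} (ha : 0 < a) (hb : 0 < b) (k : ℝ) : 0 < powerMean k a b := by
  unfold powerMean
  positivity

lemma powerMean_neg {a b : ℝ} (ha : 0 ≤ a) (hb : 0 ≤ b) (k : ℝ) :
    powerMean (-k) a b = (powerMean k a⁻¹ b⁻¹)⁻¹ := by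
  rw [powerMean, powerMean, inv_rpow ha, inv_rpow hb, rpow_neg ha, rpow_neg hb, div_neg,
    rpow_neg (by positivity)]

lemma add_div_two_rpow_lt {x y r : ℝ} (hx : 0 ≤ x) (hy : 0 ≤ y) (hxy : x ≠ y) (hr : 1 < r) :
    ((x + y) / 2) ^ r < (x ^ r + y ^ r) / 2 := by
  have h := (strictConvexOn_rpow hr).2 (Set.mem_Ici.2 hx) (Set.mem_Ici.2 hy) hxy
    one_half_pos one_half_pos (add_halves 1)
  simp only [smul_eq_mul] at h
  rw [show (x + y) / 2 = 1 / 2 * x + 1 / 2 * y by ring]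
  linarith

lemma powerMean_lt_powerMean_of_pos {a b p q : ℝ} (ha : 0 ≤ a) (hb : 0 ≤ b) (hab : a ≠ b)
    (hp : 0 < p) (hpq : p < q) : powerMean p a b < powerMean q a b := by
  have hq : 0 < q := hp.trans hpq
  have hconv := add_div_two_rpow_lt (rpow_nonneg ha p) (rpow_nonneg hb p)
    (by rwa [Ne, rpow_left_inj ha hb hp.ne']) ((one_lt_div hp).2 hpq)
  have hpow : ∀ x : ℝ, 0 ≤ x → (x ^ p) ^ (q / p) = x ^ q := fun x hx => by
    rw [← rpow_mul hx, mul_div_cancel₀ _ hp.ne']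
  rw [hpow a ha, hpow b hb] at hconv
  calc powerMean p a b = (((a ^ p + b ^ p) / 2) ^ (q / p)) ^ (1 / q) := by
        rw [powerMean, ← rpow_mul (by positivity)]
        congr 1
        field_simp
    _ < powerMean q a b := rpow_lt_rpow (by positivity) hconv (by positivity)

lemma sqrt_mul_lt_powerMean {a b k : ℝ} (ha : 0 ≤ a) (hb : 0 ≤ b) (hab : a ≠ b)
    (hk : 0 < k) : √(a * b) < powerMean k a b := by
  have hamgm := (geom_mean_lt_arith_mean2_weighted_iff_of_pos one_half_pos one_half_pos
    (rpow_nonneg ha k) (rpow_nonneg hb k) (add_halves 1)).2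
    (by rwa [Ne, rpow_left_inj ha hb hk.ne'])
  calc √(a * b) = ((a ^ k) ^ (1 / 2 : ℝ) * (b ^ k) ^ (1 / 2 : ℝ)) ^ (1 / k) := by
        rw [← mul_rpow (by positivity) (by positivity), ← mul_rpow ha hb,
          ← rpow_mul (by positivity), ← rpow_mul (by positivity), sqrt_eq_rpow]
        congr 1
        field_simp
    _ < powerMean k a b := by
        rw [powerMean]
        refine rpow_lt_rpow (by positivity) (hamgm.trans_eq ?_) (by positivity)
        ring

lemma powerMean_lt_powerMean_of_neg {a b p q : ℝ} (ha : 0 < a) (hb : 0 < b) (hab : a ≠ b)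
    (hq : q < 0) (hpq : p < q) : powerMean p a b < powerMean q a b := by
  have hinv := powerMean_lt_powerMean_of_pos (inv_nonneg.2 ha.le) (inv_nonneg.2 hb.le)
    (inv_injective.ne hab) (neg_pos.2 hq) (neg_lt_neg hpq)
  rw [← neg_neg p, ← neg_neg q, powerMean_neg ha.le hb.le, powerMean_neg ha.le hb.le]
  exact (inv_lt_inv₀ (powerMean_pos (by positivity) (by positivity) _)
    (powerMean_pos (by positivity) (by positivity) _)).2 hinv

lemma powerMean_lt_sqrt_mul_of_neg {a b k : ℝ} (ha : 0 < a) (hb : 0 < b) (hab : a ≠ b)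
    (hk : k < 0) : powerMean k a b < √(a * b) := by
  have hinv := sqrt_mul_lt_powerMean (inv_nonneg.2 ha.le) (inv_nonneg.2 hb.le)
    (inv_injective.ne hab) (neg_pos.2 hk)
  rw [← mul_inv, sqrt_inv] at hinv
  rw [← neg_neg k, powerMean_neg ha.le hb.le]
  exact (inv_lt_comm₀ (powerMean_pos (by positivity) (by positivity) _)
    (sqrt_pos.2 (by positivity))).2 hinv

theorem power_mean_strict_mono (a b : ℝ) (ha : 0 < a) (hb : 0 < b) (hab : a ≠ b)
    (k₁ k₂ : ℝ) (hk₁ : k₁ ≠ 0) (hk₂ : k₂ ≠ 0) (hlt : k₁ < k₂) :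
    ((a ^ k₁ + b ^ k₁) / 2) ^ (1 / k₁) < ((a ^ k₂ + b ^ k₂) / 2) ^ (1 / k₂) := by
  change powerMean k₁ a b < powerMean k₂ a b
  rcases hk₂.lt_or_gt with hk₂ | hk₂
  · exact powerMean_lt_powerMean_of_neg ha hb hab hk₂ hlt
  rcases hk₁.lt_or_gt with hk₁ | hk₁
  · exact (powerMean_lt_sqrt_mul_of_neg ha hb hab hk₁).trans
      (sqrt_mul_lt_powerMean ha.le hb.le hab hk₂)
  · exact powerMean_lt_powerMean_of_pos ha.le hb.le hab hk₁ hlt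
end

section
/- Let a and b be positive real numbers with b > a, and let k be a real number with 0 < k ≤ 1. Then A_k(a,b) > a^{1-k} · I(a^k, b^k), where A_k is the power mean of order k and I is the identric mean. -/
/-!
Put `x = a^k < y = b^k` and `m = (x + y)/2`. The identric mean is `exp` of the mean value of `log`
over `[x, y]`, and `log` lies strictly below its tangent line at `m`, whose mean value over
`[x, y]` is `log m`; hence `I(x, y) < m`. Finally `a^(1-k) = x^(1/k - 1) ≤ m^(1/k - 1)` because
`1/k - 1 ≥ 0`, so `a^(1-k) · I(x, y) < m^(1/k) = A_k(a, b)`.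
-/

open Real intervalIntegral

noncomputable def identricMean (x y : ℝ) : ℝ :=
  (1 / exp 1) * (y ^ y / x ^ x) ^ (1 / (y - x))

lemma log_identricMean {x y : ℝ} (hx : 0 < x) (hy : 0 < y) (hxy : x ≠ y) :
    log (identricMean x y) = (y * log y - x * log x) / (y - x) - 1 := by
  have hyx : y - x ≠ 0 := sub_ne_zero.2 hxy.symm
  rw [identricMean, log_mul (by positivity) (by positivity), one_div, log_inv, log_exp,
    log_rpow (by positivity), log_div (by positivity) (by positivity), log_rpow hy, log_rpow hx]
  field_simp
  ring

lemma log_le_log_sub_one_add_div {t m : ℝ} (ht : 0 < t) (hm : 0 < m) :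
    log t ≤ log m - 1 + t / m := by
  have h := log_le_sub_one_of_pos (div_pos ht hm)
  rw [log_div ht.ne' hm.ne'] at h
  linarith

lemma log_lt_log_sub_one_add_div {t m : ℝ} (ht : 0 < t) (hm : 0 < m) (htm : t ≠ m) :
    log t < log m - 1 + t / m := by
  have h := log_lt_sub_one_of_pos (div_pos ht hm) (by rwa [ne_eq, div_eq_one_iff_eq hm.ne'])
  rw [log_div ht.ne' hm.ne'] at h
  linarith

lemma integral_log_lt_mul_log_midpoint {x y : ℝ} (hx : 0 < x) (hxy : x < y) :
    ∫ t in x..y, log t < (y - x) * log ((x + y) / 2) := by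
  set m := (x + y) / 2
  have hm : 0 < m := by have := hx.trans hxy; positivity
  have h_tangent : ∫ t in x..y, (log m - 1 + t / m) = (y - x) * log m := by
    rw [integral_add intervalIntegrable_const (intervalIntegrable_id.div_const m),
      integral_div, integral_id, integral_const]
    field_simp
    ring
  rw [← h_tangent]
  refine integral_lt_integral_of_continuousOn_of_le_of_exists_lt hxy
    (continuousOn_log.mono fun t ht => (hx.trans_le ht.1).ne') (by fun_prop)
    (fun t ht => log_le_log_sub_one_add_div (hx.trans ht.1) hm)
    ⟨x, Set.left_mem_Icc.2 hxy.le, log_lt_log_sub_one_add_div hx hm ?_⟩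
  simp only [m]
  linarith

lemma identricMean_lt_midpoint {x y : ℝ} (hx : 0 < x) (hxy : x < y) :
    identricMean x y < (x + y) / 2 := by
  have hy : 0 < y := hx.trans hxy
  have hyx : 0 < y - x := sub_pos.2 hxy
  rw [← log_lt_log_iff (by unfold identricMean; positivity) (by positivity),
    log_identricMean hx hy hxy.ne, sub_lt_iff_lt_add, div_lt_iff₀ hyx]
  have h := integral_log_lt_mul_log_midpoint hx hxy
  rw [integral_log] at h
  linarith

lemma rpow_one_sub_mul_le_rpow_inv {a m k : ℝ} (ha : 0 < a) (hk : 0 < k) (hk1 : k ≤ 1)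
    (ham : a ^ k ≤ m) : a ^ (1 - k) * m ≤ m ^ (1 / k) := by
  have hm : 0 < m := (rpow_pos_of_pos ha k).trans_le ham
  have h_exp : 0 ≤ 1 / k - 1 := by rw [sub_nonneg, le_div_iff₀ hk, one_mul]; exact hk1
  calc a ^ (1 - k) * m = (a ^ k) ^ (1 / k - 1) * m := by
        rw [← rpow_mul ha.le]
        congr 2
        field_simp
    _ ≤ m ^ (1 / k - 1) * m := by gcongr
    _ = m ^ (1 / k) := by rw [← rpow_add_one hm.ne', sub_add_cancel]

theorem power_mean_gt_identric (a b : ℝ) (ha : 0 < a) (hb : b > a)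
    (k : ℝ) (hk : 0 < k) (hk1 : k ≤ 1) :
    ((a ^ k + b ^ k) / 2) ^ (1 / k) >
      a ^ (1 - k) *
        ((1 / Real.exp 1) * ((b ^ k) ^ (b ^ k) / (a ^ k) ^ (a ^ k)) ^ (1 / (b ^ k - a ^ k))) := by
  have hx : 0 < a ^ k := rpow_pos_of_pos ha k
  have hxy : a ^ k < b ^ k := rpow_lt_rpow ha.le hb hk
  calc a ^ (1 - k) * identricMean (a ^ k) (b ^ k)
      < a ^ (1 - k) * ((a ^ k + b ^ k) / 2) :=
        mul_lt_mul_of_pos_left (identricMean_lt_midpoint hx hxy) (rpow_pos_of_pos ha _)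
    _ ≤ ((a ^ k + b ^ k) / 2) ^ (1 / k) :=
        rpow_one_sub_mul_le_rpow_inv ha hk hk1 (by linarith)
end

section
/- Let a and b be distinct positive real numbers, let k > 0 be a real number, and let β ≥ 2/3 be a real number. Then A_β(a^k, b^k) < (3/2^(1/β)) · He(a^k, b^k), where He is the Heronian mean and A_β is the power mean of order β. -/
/-!
Power means increase with their order, so it suffices to treat `β = 2/3`. Writing `x = s ^ 6` and
`y = t ^ 6`, the claim `(x ^ (2/3) + y ^ (2/3)) ^ (3/2) < x + y + √(xy)` becomes the polynomial
inequality `(s⁴ + t⁴)³ < (s⁶ + t⁶ + s³t³)²`, whose difference factors as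
`s³t³ ((s - t)² (2s⁴ + s³t + st³ + 2t⁴) + s³t³)`.
-/

open Real

lemma add_pow_four_pow_three_lt {s t : ℝ} (hs : 0 < s) (ht : 0 < t) :
    (s ^ 4 + t ^ 4) ^ 3 < (s ^ 6 + t ^ 6 + s ^ 3 * t ^ 3) ^ 2 := by
  have hdiff : (s ^ 6 + t ^ 6 + s ^ 3 * t ^ 3) ^ 2 - (s ^ 4 + t ^ 4) ^ 3 =
      s ^ 3 * t ^ 3 * ((s - t) ^ 2 * (2 * s ^ 4 + s ^ 3 * t + s * t ^ 3 + 2 * t ^ 4) +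
        s ^ 3 * t ^ 3) := by ring
  have : 0 < s ^ 3 * t ^ 3 * ((s - t) ^ 2 * (2 * s ^ 4 + s ^ 3 * t + s * t ^ 3 + 2 * t ^ 4) +
      s ^ 3 * t ^ 3) := by positivity
  linarith

lemma exists_pos_pow_six_eq {x : ℝ} (hx : 0 < x) : ∃ s : ℝ, 0 < s ∧ s ^ 6 = x :=
  ⟨x ^ ((6 : ℕ)⁻¹ : ℝ), by positivity, rpow_inv_natCast_pow hx.le (by norm_num)⟩

lemma rpow_two_thirds_add_rpow_rpow_three_halves_lt {x y : ℝ} (hx : 0 < x) (hy : 0 < y) :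
    (x ^ (2 / 3 : ℝ) + y ^ (2 / 3 : ℝ)) ^ (3 / 2 : ℝ) < x + y + √(x * y) := by
  obtain ⟨s, hs, rfl⟩ := exists_pos_pow_six_eq hx
  obtain ⟨t, ht, rfl⟩ := exists_pos_pow_six_eq hy
  have hpow : ∀ u : ℝ, 0 ≤ u → (u ^ 6) ^ (2 / 3 : ℝ) = u ^ 4 := fun u hu => by
    rw [← rpow_natCast_mul hu]; norm_num
  have hsqrt : √(s ^ 6 * t ^ 6) = s ^ 3 * t ^ 3 := by
    rw [show s ^ 6 * t ^ 6 = (s ^ 3 * t ^ 3) ^ 2 by ring, sqrt_sq (by positivity)]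
  rw [hpow s hs.le, hpow t ht.le, hsqrt]
  refine lt_of_pow_lt_pow_left₀ 2 (by positivity) ?_
  rw [← rpow_mul_natCast (by positivity), show (3 / 2 : ℝ) * (2 : ℕ) = (3 : ℕ) by norm_num,
    rpow_natCast]
  exact add_pow_four_pow_three_lt hs ht

lemma rpow_add_rpow_rpow_one_div_lt_add_add_sqrt {x y β : ℝ} (hx : 0 < x) (hy : 0 < y)
    (hβ : 2 / 3 ≤ β) : (x ^ β + y ^ β) ^ (1 / β) < x + y + √(x * y) :=
  calc (x ^ β + y ^ β) ^ (1 / β)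
      ≤ (x ^ (2 / 3 : ℝ) + y ^ (2 / 3 : ℝ)) ^ (1 / (2 / 3 : ℝ)) :=
        rpow_add_rpow_le hx.le hy.le (by norm_num) hβ
    _ = (x ^ (2 / 3 : ℝ) + y ^ (2 / 3 : ℝ)) ^ (3 / 2 : ℝ) := by norm_num
    _ < x + y + √(x * y) := rpow_two_thirds_add_rpow_rpow_three_halves_lt hx hy

theorem power_mean_lt_heronian_general (a b : ℝ) (ha : 0 < a) (hb : 0 < b)
    (k : ℝ) (β : ℝ) (hβ : 2 / 3 ≤ β) :
    (((a ^ k) ^ β + (b ^ k) ^ β) / 2) ^ (1 / β) <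
      (3 / 2 ^ (1 / β)) * ((a ^ k + b ^ k + Real.sqrt (a ^ k * b ^ k)) / 3) := by
  have hx : 0 < a ^ k := rpow_pos_of_pos ha k
  have hy : 0 < b ^ k := rpow_pos_of_pos hb k
  calc (((a ^ k) ^ β + (b ^ k) ^ β) / 2) ^ (1 / β)
      = ((a ^ k) ^ β + (b ^ k) ^ β) ^ (1 / β) / 2 ^ (1 / β) :=
        div_rpow (by positivity) (by norm_num) _
    _ < (a ^ k + b ^ k + √(a ^ k * b ^ k)) / 2 ^ (1 / β) := by
        gcongr; exact rpow_add_rpow_rpow_one_div_lt_add_add_sqrt hx hy hβ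
    _ = (3 / 2 ^ (1 / β)) * ((a ^ k + b ^ k + √(a ^ k * b ^ k)) / 3) := by ring

theorem power_mean_lt_heronian (a b : ℝ) (ha : 0 < a) (hb : 0 < b) (hab : a ≠ b)
    (k : ℝ) (hk : 0 < k) (β : ℝ) (hβ : 2 / 3 ≤ β) :
    (((a ^ k) ^ β + (b ^ k) ^ β) / 2) ^ (1 / β) <
      (3 / 2 ^ (1 / β)) * ((a ^ k + b ^ k + Real.sqrt (a ^ k * b ^ k)) / 3) :=
  power_mean_lt_heronian_general a b ha hb k β hβ
end

section
/- Let a and b be distinct positive real numbers and let k be a real number with 0 < k ≤ 2. Then A_k(a,b) < S(a,b), where A_k is the power mean of order k and S(a,b) = (a^a · b^b)^(1/(a+b)). -/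
/-!
Power means increase with the order, so it suffices to treat `k = 2`. Taking logarithms and
writing `a = s (1 + x)`, `b = s (1 - x)` with `0 < x < 1`, the inequality `A₂ < S` reduces to
`log (1 + x²) < (1 + x) log (1 + x) + (1 - x) log (1 - x)`. Both sides vanish at `x = 0`, and the
derivative of the difference is `log ((1 + x) / (1 - x)) - 2x / (1 + x²) ≥ 2x - 2x / (1 + x²) > 0`.
-/

open Real Finset

theorem Real.rpow_mean_le_rpow_mean {ι : Type*} (s : Finset ι) (w z : ι → ℝ)
    (hw : ∀ i ∈ s, 0 ≤ w i) (hw' : ∑ i ∈ s, w i = 1) (hz : ∀ i ∈ s, 0 ≤ z i)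
    {p q : ℝ} (hp : 0 < p) (hpq : p ≤ q) :
    (∑ i ∈ s, w i * z i ^ p) ^ (1 / p) ≤ (∑ i ∈ s, w i * z i ^ q) ^ (1 / q) := by
  have hmean := arith_mean_le_rpow_mean s w (fun i => z i ^ p) hw hw'
    (fun i hi => rpow_nonneg (hz i hi) p) (p := q / p) ((one_le_div hp).2 hpq)
  have hpow : ∀ i ∈ s, w i * (z i ^ p) ^ (q / p) = w i * z i ^ q := fun i hi => by
    rw [← rpow_mul (hz i hi), mul_div_cancel₀ q hp.ne']
  rw [sum_congr rfl hpow] at hmean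
  have hsum : 0 ≤ ∑ i ∈ s, w i * z i ^ q :=
    sum_nonneg fun i hi => mul_nonneg (hw i hi) (rpow_nonneg (hz i hi) q)
  calc (∑ i ∈ s, w i * z i ^ p) ^ (1 / p)
      ≤ ((∑ i ∈ s, w i * z i ^ q) ^ (1 / (q / p))) ^ (1 / p) :=
        rpow_le_rpow (sum_nonneg fun i hi => mul_nonneg (hw i hi) (rpow_nonneg (hz i hi) p))
          hmean (by positivity)
    _ = (∑ i ∈ s, w i * z i ^ q) ^ (1 / q) := by
        rw [← rpow_mul hsum]; field_simp

theorem Real.two_mul_le_log_one_add_sub_log_one_sub {x : ℝ} (hx₀ : 0 ≤ x) (hx₁ : x < 1) :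
    2 * x ≤ log (1 + x) - log (1 - x) := by
  have h := le_hasSum (hasSum_log_sub_log_of_abs_lt_one (abs_lt.2 ⟨by linarith, hx₁⟩)) 0
    fun k _ => by positivity
  simpa using h

theorem Real.log_one_add_sq_lt {x : ℝ} (hx₀ : 0 < x) (hx₁ : x < 1) :
    log (1 + x ^ 2) < (1 + x) * log (1 + x) + (1 - x) * log (1 - x) := by
  set g : ℝ → ℝ := fun y => (1 + y) * log (1 + y) + (1 - y) * log (1 - y) - log (1 + y ^ 2)
  have hg : ∀ y ∈ Set.Ico (0 : ℝ) 1,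
      HasDerivAt g (log (1 + y) - log (1 - y) - 2 * y / (1 + y ^ 2)) y := by
    rintro y ⟨hy₀, hy₁⟩
    have hplus := (hasDerivAt_mul_log (x := 1 + y) (by linarith)).comp y
      ((hasDerivAt_id y).const_add 1)
    have hminus := (hasDerivAt_mul_log (x := 1 - y) (by linarith)).comp y
      ((hasDerivAt_id y).const_sub 1)
    have hsq := ((hasDerivAt_pow 2 y).const_add 1).log (by positivity)
    refine ((hplus.add hminus).sub hsq).congr_deriv ?_
    push_cast
    ring
  have hmono : StrictMonoOn g (Set.Ico 0 1) := by
    refine strictMonoOn_of_deriv_pos (convex_Ico 0 1)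
      (fun y hy => (hg y hy).continuousAt.continuousWithinAt) fun y hy => ?_
    rw [interior_Ico] at hy
    rw [(hg y (Set.Ioo_subset_Ico_self hy)).deriv]
    have hlog := two_mul_le_log_one_add_sub_log_one_sub hy.1.le hy.2
    have : 2 * y / (1 + y ^ 2) < 2 * y := by
      rw [div_lt_iff₀ (by positivity)]; nlinarith [hy.1, pow_pos hy.1 3]
    linarith
  simpa [g, sub_pos] using hmono ⟨le_rfl, zero_lt_one⟩ ⟨hx₀.le, hx₁⟩ hx₀

theorem Real.add_mul_log_mean_sq_lt {a b : ℝ} (ha : 0 < a) (hb : 0 < b) (hab : a ≠ b) :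
    (a + b) * log ((a ^ 2 + b ^ 2) / 2) < 2 * (a * log a + b * log b) := by
  wlog hba : b < a generalizing a b
  · have := this hb ha hab.symm (lt_of_le_of_ne (not_lt.1 hba) hab)
    rwa [add_comm b, add_comm (b ^ 2), add_comm (b * _)] at this
  obtain ⟨s, x, hs, hx₀, hx₁, rfl, rfl⟩ :
      ∃ s x : ℝ, 0 < s ∧ 0 < x ∧ x < 1 ∧ a = s * (1 + x) ∧ b = s * (1 - x) :=
    ⟨(a + b) / 2, (a - b) / (a + b), by positivity, div_pos (by linarith) (by linarith),
      (div_lt_one (by linarith)).2 (by linarith), by field_simp; ring, by field_simp; ring⟩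
  have hmean : ((s * (1 + x)) ^ 2 + (s * (1 - x)) ^ 2) / 2 = s ^ 2 * (1 + x ^ 2) := by ring
  rw [hmean, log_mul (by positivity) (by positivity), log_pow, log_mul hs.ne' (by linarith),
    log_mul hs.ne' (by linarith)]
  have := mul_lt_mul_of_pos_left (log_one_add_sq_lt hx₀ hx₁) (by positivity : 0 < 2 * s)
  linear_combination this

theorem Real.mean_sq_rpow_half_lt {a b : ℝ} (ha : 0 < a) (hb : 0 < b) (hab : a ≠ b) :
    ((a ^ 2 + b ^ 2) / 2) ^ (1 / 2 : ℝ) < (a ^ a * b ^ b) ^ (1 / (a + b)) := by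
  have hS : 0 < a ^ a * b ^ b := by positivity
  rw [← log_lt_log_iff (by positivity) (by positivity), log_rpow (by positivity), log_rpow hS,
    log_mul (by positivity) (by positivity), log_rpow ha, log_rpow hb]
  have := add_mul_log_mean_sq_lt ha hb hab
  rw [div_mul_eq_mul_div, div_mul_eq_mul_div, div_lt_div_iff₀ two_pos (by positivity)]
  linarith

theorem power_mean_lt_S (a b : ℝ) (ha : 0 < a) (hb : 0 < b) (hab : a ≠ b)
    (k : ℝ) (hk : 0 < k) (hk2 : k ≤ 2) :
    ((a ^ k + b ^ k) / 2) ^ (1 / k) < (a ^ a * b ^ b) ^ (1 / (a + b)) := by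
  have hmean := rpow_mean_le_rpow_mean univ (fun _ : Fin 2 => (1 / 2 : ℝ)) ![a, b]
    (fun _ _ => by norm_num) (by norm_num) (fun i _ => by fin_cases i <;> simp [ha.le, hb.le])
    hk hk2
  simp only [Fin.sum_univ_two, Matrix.cons_val_zero, Matrix.cons_val_one] at hmean
  calc ((a ^ k + b ^ k) / 2) ^ (1 / k) ≤ ((a ^ 2 + b ^ 2) / 2) ^ (1 / 2 : ℝ) := by
        convert hmean using 2 <;> norm_cast <;> ring
    _ < (a ^ a * b ^ b) ^ (1 / (a + b)) := mean_sq_rpow_half_lt ha hb hab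
end

section
/- Let a and b be distinct positive real numbers and let k be a real number with 0 < k ≤ 2. Then S(a,b) < 2^(1/k) · A_k(a,b), where A_k is the power mean of order k and S(a,b) = (a^a · b^b)^(1/(a+b)). -/
theorem S_lt_power_mean (a b : ℝ) (ha : 0 < a) (hb : 0 < b) (hab : a ≠ b)
    (k : ℝ) (hk : 0 < k) (hk2 : k ≤ 2) :
    (a ^ a * b ^ b) ^ (1 / (a + b)) <
      (2 : ℝ) ^ (1 / k) * ((a ^ k + b ^ k) / 2) ^ (1 / k) := by
  set M := max a b with hM
  have hMpos : 0 < M := lt_of_lt_of_le ha (le_max_left a b)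
  have habpos : 0 < a + b := by linarith
  -- step 1: a^a * b^b < M^(a+b)
  have h1 : a ^ a * b ^ b < M ^ (a + b) := by
    rw [Real.rpow_add hMpos]
    rcases lt_or_gt_of_ne hab with h | h
    · have hMb : M = b := max_eq_right h.le
      rw [hMb]
      have : a ^ a < b ^ a := Real.rpow_lt_rpow ha.le h ha
      exact mul_lt_mul_of_pos_right this (Real.rpow_pos_of_pos hb b) |>.trans_le le_rfl
    · have hMa : M = a := max_eq_left h.le
      rw [hMa]
      have : b ^ b < a ^ b := Real.rpow_lt_rpow hb.le h hb
      exact mul_lt_mul_of_pos_left this (Real.rpow_pos_of_pos ha a)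
  -- step 2: LHS < M
  have h2 : (a ^ a * b ^ b) ^ (1 / (a + b)) < M := by
    have := Real.rpow_lt_rpow (by positivity) h1 (by positivity : (0:ℝ) < 1 / (a + b))
    rwa [← Real.rpow_mul hMpos.le, mul_one_div,
      div_self habpos.ne', Real.rpow_one] at this
  -- step 3: RHS = (a^k + b^k)^(1/k)
  have h3 : (2 : ℝ) ^ (1 / k) * ((a ^ k + b ^ k) / 2) ^ (1 / k)
      = (a ^ k + b ^ k) ^ (1 / k) := by
    rw [← Real.mul_rpow (by norm_num) (by positivity)]
    ring_nf
  -- step 4: M ≤ (a^k + b^k)^(1/k)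
  have h4 : M ≤ (a ^ k + b ^ k) ^ (1 / k) := by
    have hMk : M ^ k ≤ a ^ k + b ^ k := by
      rcases max_cases a b with ⟨h, _⟩ | ⟨h, _⟩ <;> rw [hM, h] <;>
        nlinarith [Real.rpow_pos_of_pos ha k, Real.rpow_pos_of_pos hb k]
    calc M = (M ^ k) ^ (1 / k) := by
            rw [← Real.rpow_mul hMpos.le, mul_one_div, div_self hk.ne', Real.rpow_one]
      _ ≤ (a ^ k + b ^ k) ^ (1 / k) :=
            Real.rpow_le_rpow (by positivity) hMk (by positivity)
  rw [h3]
  exact h2.trans_le h4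
end

section
/- Let a and b be distinct positive real numbers. Then I(a,b) > (2A(a,b) + G(a,b))/3, where I is the identric mean, A(a,b) = (a+b)/2 is the arithmetic mean, and G(a,b) = √(ab) is the geometric mean. -/
/-!
Put `b = a s²` with `s > 1`. Then `log I(a, b) = log a + 2 s² log s / (s² - 1) - 1` and
`(2A + G) / 3 = a (s² + s + 1) / 3`, so the claim reduces to the positivity of
`gap s = 2 s² log s - (s² - 1) (1 + log ((s² + s + 1) / 3))` for `s > 1`. The function `gap` and
its first two derivatives vanish at `s = 1`, while its third derivative
`2 (s - 1)² (2 s + 1) (s + 2) / (s (s² + s + 1)³)` is positive, so `gap`, `gap'`, `gap''` are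
positive on `(1, ∞)` by three applications of the mean value theorem.
-/

open Real

lemma pos_of_hasDerivAt_pos {f f' : ℝ → ℝ} {c : ℝ} (hf : ∀ x, c ≤ x → HasDerivAt f (f' x) x)
    (hc : f c = 0) (hf' : ∀ x, c < x → 0 < f' x) {x : ℝ} (hx : c < x) : 0 < f x := by
  have hmono : StrictMonoOn f (Set.Ici c) := by
    refine strictMonoOn_of_deriv_pos (convex_Ici c)
      (fun y hy => (hf y hy).continuousAt.continuousWithinAt) fun y hy => ?_
    rw [interior_Ici] at hy
    rw [(hf y hy.le).deriv]
    exact hf' y hy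
  simpa [hc] using hmono Set.self_mem_Ici hx.le hx

namespace IdentricMean

noncomputable def gap (s : ℝ) : ℝ :=
  2 * s ^ 2 * log s - (s ^ 2 - 1) * (1 + log ((s ^ 2 + s + 1) / 3))

noncomputable def gap₁ (s : ℝ) : ℝ :=
  4 * s * log s - 2 * s * log ((s ^ 2 + s + 1) / 3)
    - (2 * s ^ 3 + s ^ 2 - 2 * s - 1) / (s ^ 2 + s + 1)

noncomputable def gap₂ (s : ℝ) : ℝ :=
  4 * log s - 2 * log ((s ^ 2 + s + 1) / 3)
    + (5 + 2 * s - 3 * s ^ 2 - 2 * s ^ 3 - 2 * s ^ 4) / (s ^ 2 + s + 1) ^ 2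

noncomputable def gap₃ (s : ℝ) : ℝ :=
  2 * (s - 1) ^ 2 * (2 * s + 1) * (s + 2) / (s * (s ^ 2 + s + 1) ^ 3)

lemma quadratic_pos (s : ℝ) : 0 < s ^ 2 + s + 1 := by
  nlinarith [sq_nonneg (s + 1), sq_nonneg s]

lemma hasDerivAt_quadratic (s : ℝ) :
    HasDerivAt (fun x : ℝ => x ^ 2 + x + 1) (2 * s + 1) s := by
  refine (((hasDerivAt_pow 2 s).add (hasDerivAt_id s)).add_const 1).congr_deriv ?_
  push_cast
  ring

lemma hasDerivAt_log_quadratic (s : ℝ) :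
    HasDerivAt (fun x : ℝ => log ((x ^ 2 + x + 1) / 3)) ((2 * s + 1) / (s ^ 2 + s + 1)) s := by
  have hu := quadratic_pos s
  refine (((hasDerivAt_quadratic s).div_const 3).log (by positivity)).congr_deriv ?_
  field_simp

lemma hasDerivAt_gap {s : ℝ} (hs : 0 < s) : HasDerivAt gap (gap₁ s) s := by
  have hu := quadratic_pos s
  have := (((hasDerivAt_pow 2 s).const_mul 2).mul (hasDerivAt_log hs.ne')).sub
    (((hasDerivAt_pow 2 s).sub_const 1).mul ((hasDerivAt_log_quadratic s).const_add 1))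
  refine this.congr_deriv ?_
  unfold gap₁
  field_simp
  ring

lemma hasDerivAt_gap₁ {s : ℝ} (hs : 0 < s) : HasDerivAt gap₁ (gap₂ s) s := by
  have hu := quadratic_pos s
  have hnum : HasDerivAt (fun x : ℝ => 2 * x ^ 3 + x ^ 2 - 2 * x - 1) (6 * s ^ 2 + 2 * s - 2) s := by
    refine (((((hasDerivAt_pow 3 s).const_mul 2).add (hasDerivAt_pow 2 s)).sub
      ((hasDerivAt_id s).const_mul 2)).sub_const 1).congr_deriv ?_
    push_cast
    ring
  have := ((((hasDerivAt_id s).const_mul 4).mul (hasDerivAt_log hs.ne')).sub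
    (((hasDerivAt_id s).const_mul 2).mul (hasDerivAt_log_quadratic s))).sub
    (hnum.div (hasDerivAt_quadratic s) hu.ne')
  refine this.congr_deriv ?_
  unfold gap₂
  simp only [id_eq]
  field_simp
  ring

lemma hasDerivAt_gap₂ {s : ℝ} (hs : 0 < s) : HasDerivAt gap₂ (gap₃ s) s := by
  have hu := quadratic_pos s
  have hnum : HasDerivAt (fun x : ℝ => 5 + 2 * x - 3 * x ^ 2 - 2 * x ^ 3 - 2 * x ^ 4)
      (2 - 6 * s - 6 * s ^ 2 - 8 * s ^ 3) s := by
    refine ((((((hasDerivAt_id s).const_mul 2).const_add 5).sub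
      ((hasDerivAt_pow 2 s).const_mul 3)).sub ((hasDerivAt_pow 3 s).const_mul 2)).sub
      ((hasDerivAt_pow 4 s).const_mul 2)).congr_deriv ?_
    push_cast
    ring
  have := (((hasDerivAt_log hs.ne').const_mul 4).sub
    ((hasDerivAt_log_quadratic s).const_mul 2)).add
    (hnum.div ((hasDerivAt_quadratic s).fun_pow 2) (pow_pos hu 2).ne')
  refine this.congr_deriv ?_
  unfold gap₃
  field_simp
  ring

lemma gap₃_pos {s : ℝ} (hs : 1 < s) : 0 < gap₃ s := by
  have : 0 < (s - 1) ^ 2 := pow_pos (sub_pos.2 hs) 2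
  unfold gap₃
  apply div_pos <;> positivity

lemma gap_pos {s : ℝ} (hs : 1 < s) : 0 < gap s := by
  have h₂ (x : ℝ) (hx : 1 < x) : 0 < gap₂ x :=
    pos_of_hasDerivAt_pos (fun y hy => hasDerivAt_gap₂ (by linarith)) (by norm_num [gap₂])
      (fun _ => gap₃_pos) hx
  have h₁ (x : ℝ) (hx : 1 < x) : 0 < gap₁ x :=
    pos_of_hasDerivAt_pos (fun y hy => hasDerivAt_gap₁ (by linarith)) (by norm_num [gap₁]) h₂ hx
  exact pos_of_hasDerivAt_pos (fun y hy => hasDerivAt_gap (by linarith)) (by norm_num [gap]) h₁ hs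

lemma log_quadratic_lt {s : ℝ} (hs : 1 < s) :
    log ((s ^ 2 + s + 1) / 3) < 2 * s ^ 2 * log s / (s ^ 2 - 1) - 1 := by
  have hden : 0 < s ^ 2 - 1 := by nlinarith
  have hgap : 2 * s ^ 2 * log s / (s ^ 2 - 1) - 1 - log ((s ^ 2 + s + 1) / 3)
      = gap s / (s ^ 2 - 1) := by
    unfold gap
    field_simp
    ring
  rw [← sub_pos, hgap]
  exact div_pos (gap_pos hs) hden

end IdentricMean

open IdentricMean

lemma identric_eq_exp_slope {a b : ℝ} (ha : 0 < a) (hb : 0 < b) :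
    1 / exp 1 * (b ^ b / a ^ a) ^ (1 / (b - a)) = exp (slope (fun x => x * log x) a b - 1) := by
  rw [rpow_def_of_pos hb, rpow_def_of_pos ha, ← exp_sub, ← exp_mul, exp_sub, slope_def_field]
  ring_nf

lemma add_add_sqrt_div_three_lt_exp_slope {a b : ℝ} (ha : 0 < a) (hab : a < b) :
    (a + b + √(a * b)) / 3 < exp (slope (fun x => x * log x) a b - 1) := by
  obtain ⟨s, hs, rfl⟩ : ∃ s, 1 < s ∧ b = a * s ^ 2 :=
    ⟨√(b / a), by rw [lt_sqrt zero_le_one, one_pow, one_lt_div ha]; exact hab, by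
      rw [sq_sqrt (div_pos (ha.trans hab) ha).le]; field_simp⟩
  have hden : 0 < s ^ 2 - 1 := by nlinarith
  have hslope : slope (fun x => x * log x) a (a * s ^ 2) - 1
      = log a + (2 * s ^ 2 * log s / (s ^ 2 - 1) - 1) := by
    rw [slope_def_field, log_mul ha.ne' (by positivity), log_pow]
    field_simp
    push_cast
    ring
  have hsqrt : √(a * (a * s ^ 2)) = a * s := by
    rw [show a * (a * s ^ 2) = (a * s) ^ 2 by ring, sqrt_sq (by positivity)]
  calc (a + a * s ^ 2 + √(a * (a * s ^ 2))) / 3 = a * ((s ^ 2 + s + 1) / 3) := by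
        rw [hsqrt]; ring
    _ < a * exp (2 * s ^ 2 * log s / (s ^ 2 - 1) - 1) := by
        rw [mul_lt_mul_iff_right₀ ha, ← log_lt_iff_lt_exp (div_pos (quadratic_pos s) three_pos)]
        exact log_quadratic_lt hs
    _ = exp (slope (fun x => x * log x) a (a * s ^ 2) - 1) := by
        rw [hslope, exp_add, exp_log ha]

theorem identric_gt (a b : ℝ) (ha : 0 < a) (hb : 0 < b) (hab : a ≠ b) :
    (1 / Real.exp 1) * (b ^ b / a ^ a) ^ (1 / (b - a)) >
      (2 * ((a + b) / 2) + Real.sqrt (a * b)) / 3 := by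
  rw [identric_eq_exp_slope ha hb, gt_iff_lt, show 2 * ((a + b) / 2) = a + b by ring]
  rcases hab.lt_or_gt with h | h
  · exact add_add_sqrt_div_three_lt_exp_slope ha h
  · rw [slope_comm, add_comm a b, mul_comm a b]
    exact add_add_sqrt_div_three_lt_exp_slope hb h
end

section
/- Let a and b be distinct positive real numbers. Then He(a,b) < A_{2/3}(a,b), where He is the Heronian mean and A_{2/3} is the power mean of order 2/3. -/
/-!
Writing `a = x ^ 6` and `b = y ^ 6` turns every root in the inequality into a monomial, and
squaring removes the exponent `3 / 2`. What remains is `8 S ^ 2 < 9 T ^ 3` for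
`S = x ^ 6 + y ^ 6 + x ^ 3 y ^ 3` and `T = x ^ 4 + y ^ 4`, and the difference `9 T ^ 3 - 8 S ^ 2`
factors as `(x - y) ^ 4` times a form that is positive on the positive quadrant.
-/

lemma exists_pos_pow_eq {a : ℝ} (ha : 0 < a) {n : ℕ} (hn : n ≠ 0) : ∃ x > 0, x ^ n = a :=
  ⟨a ^ (n⁻¹ : ℝ), by positivity, Real.rpow_inv_natCast_pow ha.le hn⟩

lemma rpow_two_thirds_pow_six {x : ℝ} (hx : 0 ≤ x) : (x ^ 6) ^ (2 / 3 : ℝ) = x ^ 4 := by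
  rw [← Real.rpow_natCast, ← Real.rpow_mul hx]
  norm_num

lemma sqrt_pow_six_mul_pow_six {x y : ℝ} (hx : 0 ≤ x) (hy : 0 ≤ y) :
    Real.sqrt (x ^ 6 * y ^ 6) = x ^ 3 * y ^ 3 := by
  rw [show x ^ 6 * y ^ 6 = (x ^ 3 * y ^ 3) ^ 2 by ring, Real.sqrt_sq (by positivity)]

lemma lt_rpow_three_halves_iff {u c : ℝ} (hu : 0 ≤ u) (hc : 0 ≤ c) :
    u < c ^ (3 / 2 : ℝ) ↔ u ^ 2 < c ^ 3 := by
  have hsqrt : c ^ (3 / 2 : ℝ) = Real.sqrt (c ^ 3) := by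
    rw [Real.sqrt_eq_rpow, ← Real.rpow_natCast, ← Real.rpow_mul hc]
    norm_num
  rw [hsqrt, Real.lt_sqrt hu]

lemma nine_mul_cube_sub_eight_mul_sq (x y : ℝ) :
    9 * (x ^ 4 + y ^ 4) ^ 3 - 8 * (x ^ 6 + y ^ 6 + x ^ 3 * y ^ 3) ^ 2 =
      (x - y) ^ 4 * ((x ^ 4 - y ^ 4) ^ 2 +
        2 * x * y * (2 * x ^ 6 + 5 * x ^ 5 * y + 2 * x ^ 4 * y ^ 2 + 2 * x ^ 2 * y ^ 4
          + 5 * x * y ^ 5 + 2 * y ^ 6)) := by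
  ring

lemma sq_div_three_lt_cube_div_two {x y : ℝ} (hx : 0 < x) (hy : 0 < y) (hxy : x ≠ y) :
    ((x ^ 6 + y ^ 6 + x ^ 3 * y ^ 3) / 3) ^ 2 < ((x ^ 4 + y ^ 4) / 2) ^ 3 := by
  have hsub : x - y ≠ 0 := sub_ne_zero.mpr hxy
  have hfactor : 0 < (x - y) ^ 4 * ((x ^ 4 - y ^ 4) ^ 2 +
      2 * x * y * (2 * x ^ 6 + 5 * x ^ 5 * y + 2 * x ^ 4 * y ^ 2 + 2 * x ^ 2 * y ^ 4
        + 5 * x * y ^ 5 + 2 * y ^ 6)) := by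
    positivity
  nlinarith [nine_mul_cube_sub_eight_mul_sq x y]

theorem heronian_lt_power_mean_two_thirds (a b : ℝ) (ha : 0 < a) (hb : 0 < b) (hab : a ≠ b) :
    (a + b + Real.sqrt (a * b)) / 3 <
      ((a ^ (2 / 3 : ℝ) + b ^ (2 / 3 : ℝ)) / 2) ^ (3 / 2 : ℝ) := by
  obtain ⟨x, hx, rfl⟩ := exists_pos_pow_eq ha (by norm_num : 6 ≠ 0)
  obtain ⟨y, hy, rfl⟩ := exists_pos_pow_eq hb (by norm_num : 6 ≠ 0)
  have hxy : x ≠ y := by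
    rintro rfl
    exact hab rfl
  rw [rpow_two_thirds_pow_six hx.le, rpow_two_thirds_pow_six hy.le,
    sqrt_pow_six_mul_pow_six hx.le hy.le,
    lt_rpow_three_halves_iff (by positivity) (by positivity)]
  exact sq_div_three_lt_cube_div_two hx hy hxy
end
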